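/- Let V : ℂ^d → ℂ^n ⊗ ℂ^k be an isometry, let L(X) = [Tr_n ⊗ id_k](V X V*) be the associated quantum channel, and let L̄ be the quantum channel associated to the entrywise complex conjugate isometry V̄. Then the output of L ⊗ L̄ on the normalized maximally entangled state cannot be too mixed: ‖[L ⊗ L̄](E_d/d)‖ ≥ d/(nk). -/

import Mathlib

open scoped Kronecker ENNReal ComplexOrder
open Matrix Filter

noncomputable section

/-- A quantum state: a positive semidefinite matrix of trace 1. -/
def IsState {A : Type*} [Fintype A] (X : Matrix A A ℂ) : Prop :=
  X.PosSemidef ∧ X.trace = 1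

/-- The Choi matrix of a linear map between matrix algebras. -/
def choiMatrix {A B : Type*} [Fintype A] [DecidableEq A]
    (L : Matrix A A ℂ →ₗ[ℂ] Matrix B B ℂ) : Matrix (B × A) (B × A) ℂ :=
  ∑ i : A, ∑ j : A, (L (Matrix.single i j 1)) ⊗ₖ (Matrix.single i j 1)

/-- A quantum channel: a trace-preserving, completely positive linear map, the latter
meaning that its Choi matrix is positive semidefinite. -/
def IsChannel {A B : Type*} [Fintype A] [DecidableEq A] [Fintype B]
    (L : Matrix A A ℂ →ₗ[ℂ] Matrix B B ℂ) : Prop :=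
  (∀ X, (L X).trace = X.trace) ∧ (choiMatrix L).PosSemidef

/-- The p-Rényi entropy of a (Hermitian) matrix, p ∈ [0,∞]. -/
def renyiEntropy {B : Type*} [Fintype B] [DecidableEq B] (p : ℝ≥0∞)
    (X : Matrix B B ℂ) : ℝ :=
  if h : X.IsHermitian then
    if p = 0 then Real.log (Nat.card {i // h.eigenvalues i ≠ 0})
    else if p = 1 then -∑ i, h.eigenvalues i * Real.log (h.eigenvalues i)
    else if p = ⊤ then -Real.log (⨆ i, h.eigenvalues i)
    else (1 - p.toReal)⁻¹ * Real.log (∑ i, (h.eigenvalues i) ^ p.toReal)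
  else 0

/-- The minimum output p-Rényi entropy of a channel. -/
def minOutputEntropy {A B : Type*} [Fintype A] [Fintype B] [DecidableEq B] (p : ℝ≥0∞)
    (L : Matrix A A ℂ →ₗ[ℂ] Matrix B B ℂ) : ℝ :=
  ⨅ X : {X : Matrix A A ℂ // IsState X}, renyiEntropy p (L X.1)

/-- The r-fold tensor power of a linear map between matrix algebras, determined by
Kronecker products of matrix units. -/
def tensorPow {A B : Type*} [Fintype A] [DecidableEq A] [Fintype B]
    (L : Matrix A A ℂ →ₗ[ℂ] Matrix B B ℂ) (r : ℕ) :
    Matrix (Fin r → A) (Fin r → A) ℂ →ₗ[ℂ] Matrix (Fin r → B) (Fin r → B) ℂ where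
  toFun X := Matrix.of fun i j => ∑ a : Fin r → A, ∑ b : Fin r → A,
      X a b * ∏ m, L (Matrix.single (a m) (b m) 1) (i m) (j m)
  map_add' X Y := by
    ext i j
    simp [Matrix.add_apply, add_mul, Finset.sum_add_distrib]
  map_smul' c X := by
    ext i j
    simp [Matrix.smul_apply, smul_eq_mul, Finset.mul_sum, mul_assoc]

/-- The tensor product of two linear maps between matrix algebras, determined by
Kronecker products: (L ⊗ K)(X ⊗ Y) = L(X) ⊗ K(Y). -/
def channelTensor {A B C D : Type*} [Fintype A] [DecidableEq A] [Fintype B]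
    [Fintype C] [DecidableEq C] [Fintype D]
    (L : Matrix A A ℂ →ₗ[ℂ] Matrix B B ℂ) (K : Matrix C C ℂ →ₗ[ℂ] Matrix D D ℂ) :
    Matrix (A × C) (A × C) ℂ →ₗ[ℂ] Matrix (B × D) (B × D) ℂ where
  toFun X := Matrix.of fun i j => ∑ a : A × C, ∑ b : A × C,
      X a b * (L (Matrix.single a.1 b.1 1) i.1 j.1
        * K (Matrix.single a.2 b.2 1) i.2 j.2)
  map_add' X Y := by
    ext i j
    simp [Matrix.add_apply, add_mul, Finset.sum_add_distrib]
  map_smul' c X := by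
    ext i j
    simp [Matrix.smul_apply, smul_eq_mul, Finset.mul_sum, mul_assoc]

/-- The p-additivity rate of a channel. -/
def additivityRate {A B : Type*} [Fintype A] [DecidableEq A] [Fintype B] [DecidableEq B]
    (p : ℝ≥0∞) (L : Matrix A A ℂ →ₗ[ℂ] Matrix B B ℂ) : ℝ :=
  sSup {a : ℝ | a ∈ Set.Icc (0 : ℝ) 1 ∧
    a * minOutputEntropy p L ≤
      Filter.liminf (fun r : ℕ => minOutputEntropy p (tensorPow L r) / r) Filter.atTop}

/-- The operator norm (the norm induced by the ℓ² Euclidean norm) of a matrix. -/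
def opNorm {A : Type*} [Fintype A] [DecidableEq A] (M : Matrix A A ℂ) : ℝ :=
  ‖Matrix.toEuclideanCLM (𝕜 := ℂ) M‖

/-- Partial trace over the first tensor factor. -/
def ptraceFst {N K : Type*} [Fintype N] (M : Matrix (N × K) (N × K) ℂ) : Matrix K K ℂ :=
  Matrix.of fun i j => ∑ a : N, M (a, i) (a, j)

/-- Partial trace over the second tensor factor. -/
def ptraceSnd {N K : Type*} [Fintype K] (M : Matrix (N × K) (N × K) ℂ) : Matrix N N ℂ :=
  Matrix.of fun i j => ∑ b : K, M (i, b) (j, b)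

/-- Partial transposition of the second tensor factor. -/
def ptranspose {B Q : Type*} (M : Matrix (B × Q) (B × Q) ℂ) : Matrix (B × Q) (B × Q) ℂ :=
  Matrix.of fun p q => M (p.1, q.2) (q.1, p.2)

/-- The quantum channel associated to an isometry V : ℂ^d → ℂ^n ⊗ ℂ^k,
X ↦ [Tr_n ⊗ id_k](V X V*). -/
def channelOfIsometry {N K D : Type*} [Fintype N] [Fintype K] [Fintype D]
    (V : Matrix (N × K) D ℂ) : Matrix D D ℂ →ₗ[ℂ] Matrix K K ℂ where
  toFun X := ptraceFst (V * X * Vᴴ)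
  map_add' X Y := by
    ext i j
    simp [ptraceFst, Matrix.mul_add, Matrix.add_mul, Finset.sum_add_distrib]
  map_smul' c X := by
    ext i j
    simp [ptraceFst, Matrix.mul_smul, Matrix.smul_mul, Finset.mul_sum]

/-- The complementary channel associated to an isometry V : ℂ^d → ℂ^n ⊗ ℂ^k,
X ↦ [id_n ⊗ Tr_k](V X V*). -/
def compChannelOfIsometry {N K D : Type*} [Fintype N] [Fintype K] [Fintype D]
    (V : Matrix (N × K) D ℂ) : Matrix D D ℂ →ₗ[ℂ] Matrix N N ℂ where
  toFun X := ptraceSnd (V * X * Vᴴ)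
  map_add' X Y := by
    ext i j
    simp [ptraceSnd, Matrix.mul_add, Matrix.add_mul, Finset.sum_add_distrib]
  map_smul' c X := by
    ext i j
    simp [ptraceSnd, Matrix.mul_smul, Matrix.smul_mul, Finset.mul_sum]

/-- The Kronecker product of two isometries, regrouped so that the environment factors
come first and the output factors second. -/
def isometryTensor {N₁ K₁ D₁ N₂ K₂ D₂ : Type*}
    (V₁ : Matrix (N₁ × K₁) D₁ ℂ) (V₂ : Matrix (N₂ × K₂) D₂ ℂ) :
    Matrix ((N₁ × N₂) × (K₁ × K₂)) (D₁ × D₂) ℂ :=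
  Matrix.of fun p c => V₁ (p.1.1, p.2.1) c.1 * V₂ (p.1.2, p.2.2) c.2

end


/-! Let `Ω = ∑ᵢ eᵢ ⊗ eᵢ ∈ ℂ^k ⊗ ℂ^k`, so `‖Ω‖² = k` and
`‖[L ⊗ L̄](E_d/d)‖ ≥ ⟪Ω, [L ⊗ L̄](E_d/d) Ω⟫ / k`. Reshaping `V` into an `n × kd` matrix `W`,
this quadratic form is `‖WᴴW‖₂² / d` (Frobenius norm), and `‖WᴴW‖₂² = tr (WᴴW)² = tr (WWᴴ)²`
is also `‖C‖₂²` for `C = WWᴴ`, the output of the complementary channel on `1`. As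
`tr C = tr (VᴴV) = d`, Cauchy–Schwarz on the diagonal of `C` gives `‖C‖₂² ≥ d² / n`. -/

section

variable {N K D : Type*} [Fintype N] [Fintype K] [Fintype D]

lemma trace_ptraceSnd (M : Matrix (N × K) (N × K) ℂ) : (ptraceSnd M).trace = M.trace := by
  simp [ptraceSnd, Matrix.trace, Fintype.sum_prod_type]

lemma trace_compChannelOfIsometry (V : Matrix (N × K) D ℂ) (X : Matrix D D ℂ) :
    (compChannelOfIsometry V X).trace = (Vᴴ * V * X).trace := by
  rw [compChannelOfIsometry, LinearMap.coe_mk, AddHom.coe_mk, trace_ptraceSnd,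
    Matrix.trace_mul_cycle]

lemma channelOfIsometry_single_apply [DecidableEq D] (V : Matrix (N × K) D ℂ) (a b : D)
    (i j : K) :
    channelOfIsometry V (Matrix.single a b 1) i j = ∑ s, V (s, i) a * star (V (s, j) b) := by
  simp [channelOfIsometry, ptraceFst, Matrix.mul_apply, Matrix.single, ite_and]

end

lemma trace_mul_conjTranspose_eq_sum {m n R : Type*} [Fintype m] [Fintype n] [Semiring R]
    [StarRing R] (M : Matrix m n R) :
    (M * Mᴴ).trace = ∑ i, ∑ j, M i j * star (M i j) := by
  simp [Matrix.trace, Matrix.mul_apply]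

lemma sum_mul_star_conjTranspose_mul_self {m n R : Type*} [Fintype m] [Fintype n]
    [CommSemiring R] [StarRing R] (W : Matrix m n R) :
    ∑ x, ∑ y, (Wᴴ * W) x y * star ((Wᴴ * W) x y)
      = ∑ s, ∑ t, (W * Wᴴ) s t * star ((W * Wᴴ) s t) := by
  rw [← trace_mul_conjTranspose_eq_sum, ← trace_mul_conjTranspose_eq_sum]
  simp only [Matrix.conjTranspose_mul, Matrix.conjTranspose_conjTranspose, Matrix.mul_assoc]
  rw [Matrix.trace_mul_comm]
  simp only [Matrix.mul_assoc]

lemma norm_trace_sq_le_card_mul_sum_norm_sq {N E : Type*} [Fintype N]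
    [SeminormedAddCommGroup E] (M : Matrix N N E) :
    ‖M.trace‖ ^ 2 ≤ Fintype.card N * ∑ i, ∑ j, ‖M i j‖ ^ 2 := by
  calc ‖M.trace‖ ^ 2 ≤ (∑ i, ‖M i i‖) ^ 2 := by
        gcongr
        exact norm_sum_le _ _
    _ ≤ Fintype.card N * ∑ i, ‖M i i‖ ^ 2 := sq_sum_le_card_mul_sum_sq
    _ ≤ Fintype.card N * ∑ i, ∑ j, ‖M i j‖ ^ 2 := by
        gcongr with i
        exact Finset.single_le_sum (f := fun j => ‖M i j‖ ^ 2) (fun _ _ => by positivity)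
          (Finset.mem_univ i)

def maxEntangled (D : Type*) [DecidableEq D] : Matrix (D × D) (D × D) ℂ :=
  Matrix.of fun p q => if p.1 = p.2 ∧ q.1 = q.2 then 1 else 0

lemma channelTensor_maxEntangled_apply {A B C : Type*} [Fintype A] [DecidableEq A] [Fintype B]
    [Fintype C] (L : Matrix A A ℂ →ₗ[ℂ] Matrix B B ℂ) (L' : Matrix A A ℂ →ₗ[ℂ] Matrix C C ℂ)
    (p q : B × C) :
    channelTensor L L' (maxEntangled A) p q
      = ∑ a, ∑ b, L (Matrix.single a b 1) p.1 q.1 * L' (Matrix.single a b 1) p.2 q.2 := by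
  simp [channelTensor, maxEntangled, Fintype.sum_prod_type, ite_and]

lemma sum_diag_channelTensor_conj_maxEntangled {N K D : Type*} [Fintype N] [Fintype K]
    [Fintype D] [DecidableEq D] (V : Matrix (N × K) D ℂ) :
    ∑ i, ∑ j, channelTensor (channelOfIsometry V) (channelOfIsometry (V.map (starRingEnd ℂ)))
        (maxEntangled D) (i, i) (j, j)
      = ((∑ s, ∑ t, ‖compChannelOfIsometry V 1 s t‖ ^ 2 : ℝ) : ℂ) := by
  set W : Matrix N (K × D) ℂ := Matrix.of fun s x => V (s, x.1) x.2
  have hcomp : compChannelOfIsometry V 1 = W * Wᴴ := by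
    ext s t
    simp only [compChannelOfIsometry, LinearMap.coe_mk, AddHom.coe_mk, Matrix.mul_one]
    simp [ptraceSnd, Matrix.mul_apply, Fintype.sum_prod_type, W]
  have hconj : ∀ i j a b, channelOfIsometry (V.map (starRingEnd ℂ)) (Matrix.single a b 1) i j
      = (Wᴴ * W) (i, a) (j, b) := by
    intro i j a b
    simp [channelOfIsometry_single_apply, Matrix.mul_apply, W]
  have hself : ∀ i j a b, channelOfIsometry V (Matrix.single a b 1) i j
      = star ((Wᴴ * W) (i, a) (j, b)) := by
    intro i j a b
    simp [channelOfIsometry_single_apply, Matrix.mul_apply, W, star_sum]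
  have hnorm : ∀ z : ℂ, ((‖z‖ ^ 2 : ℝ) : ℂ) = z * star z := fun z => by
    rw [Complex.star_def, Complex.mul_conj, Complex.normSq_eq_norm_sq]
  simp only [channelTensor_maxEntangled_apply, hconj, hself, hcomp, Complex.ofReal_sum, hnorm,
    ← sum_mul_star_conjTranspose_mul_self, Fintype.sum_prod_type, mul_comm (star _)]
  exact Finset.sum_congr rfl fun i _ => Finset.sum_comm

def maxEntangledVec (K : Type*) [DecidableEq K] : EuclideanSpace ℂ (K × K) :=
  WithLp.toLp 2 fun p => if p.1 = p.2 then 1 else 0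

section

variable {K : Type*} [Fintype K] [DecidableEq K]

lemma norm_maxEntangledVec_sq : ‖maxEntangledVec K‖ ^ 2 = Fintype.card K := by
  rw [EuclideanSpace.norm_sq_eq, Fintype.sum_prod_type]
  simp [maxEntangledVec, apply_ite]

lemma inner_toEuclideanCLM_maxEntangledVec (M : Matrix (K × K) (K × K) ℂ) :
    inner ℂ (Matrix.toEuclideanCLM (𝕜 := ℂ) M (maxEntangledVec K)) (maxEntangledVec K)
      = star (∑ i, ∑ j, M (i, i) (j, j)) := by
  simp [maxEntangledVec, EuclideanSpace.inner_toLp_toLp, dotProduct, Matrix.mulVec, star_sum,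
    Fintype.sum_prod_type]

lemma re_sum_diag_div_card_le_opNorm (M : Matrix (K × K) (K × K) ℂ) :
    (∑ i, ∑ j, M (i, i) (j, j)).re / Fintype.card K ≤ opNorm M := by
  have h := (Matrix.toEuclideanCLM (𝕜 := ℂ) M).rayleighQuotient_le_norm (maxEntangledVec K)
  rw [ContinuousLinearMap.rayleighQuotient, ContinuousLinearMap.reApplyInnerSelf_apply,
    inner_toEuclideanCLM_maxEntangledVec, norm_maxEntangledVec_sq, RCLike.star_def,
    RCLike.conj_re, RCLike.re_to_complex] at h
  exact (le_abs_self _).trans h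

end

theorem hayden_winter_bound (n k d : ℕ)
    (V : Matrix (Fin n × Fin k) (Fin d) ℂ) (hV : Vᴴ * V = 1) :
    (d : ℝ) / ((n : ℝ) * (k : ℝ)) ≤
      opNorm (channelTensor (channelOfIsometry V)
        (channelOfIsometry (V.map (starRingEnd ℂ)))
        (((d : ℂ))⁻¹ • Matrix.of fun p q =>
          if p.1 = p.2 ∧ q.1 = q.2 then (1 : ℂ) else 0)) := by
  set Φ := channelTensor (channelOfIsometry V) (channelOfIsometry (V.map (starRingEnd ℂ)))
  set F : ℝ := ∑ s, ∑ t, ‖compChannelOfIsometry V 1 s t‖ ^ 2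
  have hF : (d : ℝ) ^ 2 ≤ n * F := by
    simpa [trace_compChannelOfIsometry, hV] using
      norm_trace_sq_le_card_mul_sum_norm_sq (compChannelOfIsometry V 1)
  have hdiag : ∑ i, ∑ j, Φ ((d : ℂ)⁻¹ • maxEntangled (Fin d)) (i, i) (j, j)
      = (((d : ℝ)⁻¹ * F : ℝ) : ℂ) := by
    simp only [map_smul, Matrix.smul_apply, smul_eq_mul, ← Finset.mul_sum, Φ,
      sum_diag_channelTensor_conj_maxEntangled]
    rw [Complex.ofReal_mul, Complex.ofReal_inv, Complex.ofReal_natCast]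
  have hT := re_sum_diag_div_card_le_opNorm (Φ ((d : ℂ)⁻¹ • maxEntangled (Fin d)))
  rw [hdiag, Complex.ofReal_re, Fintype.card_fin] at hT
  refine le_trans ?_ hT
  rcases (Nat.cast_nonneg d : (0 : ℝ) ≤ d).eq_or_lt with hd | hd
  · simp [← hd]
  rcases n.eq_zero_or_pos with rfl | hn
  · simp only [CharP.cast_eq_zero, zero_mul, div_zero]
    positivity
  rw [div_mul_eq_div_div]
  gcongr
  rw [div_le_iff₀ (by positivity), inv_mul_eq_div, div_mul_eq_mul_div, le_div_iff₀ hd]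
  linarith
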